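/- The half-plane capacity is monotone: if K and K′ are compact ℍ-hulls with K ⊆ K′, then hcap(K) ≤ hcap(K′). -/

import Mathlib

open Filter Topology

/-- The open upper half-plane. -/
def UHP : Set ℂ := {z : ℂ | 0 < z.im}

/-- The filter of neighbourhoods of `∞` inside the upper half-plane. -/
noncomputable def atInfUHP : Filter ℂ :=
  (Filter.comap (fun z : ℂ => ‖z‖) Filter.atTop) ⊓ Filter.principal UHP

/-- `K` is a compact `ℍ`-hull: a bounded subset of `ℍ` with `K = cl(K) ∩ ℍ` whose
complement in `ℍ` is simply connected. -/
def IsCompactHHull (K : Set ℂ) : Prop :=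
  Bornology.IsBounded K ∧ K ⊆ UHP ∧ K = closure K ∩ UHP ∧
    SimplyConnectedSpace (UHP \ K : Set ℂ)

/-- `g` is the hydrodynamically normalized conformal map from `ℍ \ K` onto `ℍ`:
holomorphic and injective on `ℍ \ K`, with image `ℍ`, and `g(z) − z → 0` as `z → ∞`. -/
def IsHydroMap (K : Set ℂ) (g : ℂ → ℂ) : Prop :=
  DifferentiableOn ℂ g (UHP \ K) ∧ Set.InjOn g (UHP \ K) ∧
    g '' (UHP \ K) = UHP ∧ Filter.Tendsto (fun z => g z - z) atInfUHP (nhds 0)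

/-- `K` is a compact `ℍ`-hull with hydrodynamically normalized map `g` and half-plane
capacity `c`, i.e. `z (g(z) − z) → c` as `z → ∞`. -/
def HasHcap (K : Set ℂ) (g : ℂ → ℂ) (c : ℝ) : Prop :=
  IsHydroMap K g ∧ Filter.Tendsto (fun z => z * (g z - z)) atInfUHP (nhds (c : ℂ))

/-! ### Auxiliary lemmas -/

lemma isOpen_UHP : IsOpen UHP := isOpen_lt continuous_const Complex.continuous_im

lemma mem_atInfUHP_iff {s : Set ℂ} :
    s ∈ atInfUHP ↔ ∃ M : ℝ, ∀ z : ℂ, M ≤ ‖z‖ → z ∈ UHP → z ∈ s := by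
  rw [atInfUHP, Filter.mem_inf_principal]
  constructor
  · intro h
    rw [Filter.mem_comap] at h
    obtain ⟨t, ht, hsub⟩ := h
    obtain ⟨M, hM⟩ := Filter.mem_atTop_sets.mp ht
    exact ⟨M, fun z hz hzU => hsub (hM _ hz) hzU⟩
  · rintro ⟨M, hM⟩
    rw [Filter.mem_comap]
    exact ⟨Set.Ici M, Filter.mem_atTop _, fun z hz hzU => hM z hz hzU⟩

/-- Extract a uniform bound at infinity from a `Tendsto … atInfUHP (𝓝 0)` statement. -/
lemma bound_of_tendsto_atInfUHP {f : ℂ → ℂ} (h : Filter.Tendsto f atInfUHP (nhds 0))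
    {ε : ℝ} (hε : 0 < ε) :
    ∃ M : ℝ, ∀ z : ℂ, M ≤ ‖z‖ → z ∈ UHP → ‖f z‖ ≤ ε := by
  have hmem : Metric.closedBall (0 : ℂ) ε ∈ nhds (0 : ℂ) := Metric.closedBall_mem_nhds _ hε
  have := mem_atInfUHP_iff.mp (h hmem)
  obtain ⟨M, hM⟩ := this
  refine ⟨M, fun z hz hzU => ?_⟩
  have := hM z hz hzU
  simpa [Metric.mem_closedBall, Complex.dist_eq] using this

/-- Open mapping theorem for an injective holomorphic map: images of open subsets are open. -/
lemma isOpen_image_of_injOn {f : ℂ → ℂ} {D : Set ℂ} (hD : IsOpen D)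
    (hf : DifferentiableOn ℂ f D) (hinj : Set.InjOn f D)
    {s : Set ℂ} (hs : IsOpen s) (hsD : s ⊆ D) : IsOpen (f '' s) := by
  rw [isOpen_iff_mem_nhds]
  rintro w ⟨z, hzs, rfl⟩
  have hA : AnalyticAt ℂ f z := (hf.analyticOnNhd hD) z (hsD hzs)
  rcases hA.eventually_constant_or_nhds_le_map_nhds with hconst | hmap
  · exfalso
    obtain ⟨r, hr, hrf⟩ := Metric.eventually_nhds_iff.mp hconst
    obtain ⟨r', hr', hr's⟩ := Metric.isOpen_iff.mp hs z hzs
    set δ := min r r' / 2 with hδdef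
    have hδ : 0 < δ := by positivity
    have hδr : δ < r := by
      have : min r r' ≤ r := min_le_left _ _
      simp only [hδdef]; linarith
    have hδr' : δ < r' := by
      have : min r r' ≤ r' := min_le_right _ _
      simp only [hδdef]; linarith
    have hzz : (z + δ) ≠ z := by
      intro h
      have : (δ : ℂ) = 0 := by linear_combination h
      simp only [Complex.ofReal_eq_zero] at this
      linarith
    have hd1 : dist (z + (δ : ℂ)) z < r := by
      simp only [dist_eq_norm, add_sub_cancel_left]
      simpa [Complex.norm_real, abs_of_pos hδ] using hδr
    have hd2 : dist (z + (δ : ℂ)) z < r' := by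
      simp only [dist_eq_norm, add_sub_cancel_left]
      simpa [Complex.norm_real, abs_of_pos hδ] using hδr'
    have hmem : z + (δ : ℂ) ∈ s := hr's (by simpa [Metric.mem_ball] using hd2)
    have : z + (δ : ℂ) = z := hinj (hsD hmem) (hsD hzs) (hrf hd1)
    exact hzz this
  · apply hmap
    rw [Filter.mem_map]
    exact Filter.mem_of_superset (hs.mem_nhds hzs) (Set.subset_preimage_image f s)

/-- The exterior of a disc in the upper half-plane is preconnected. -/
lemma isPreconnected_exterior (r : ℝ) (hr : 0 ≤ r) :
    IsPreconnected {w : ℂ | 0 < w.im ∧ r < ‖w‖} := by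
  have himg : {w : ℂ | 0 < w.im ∧ r < ‖w‖} =
      (fun p : ℝ × ℝ => (p.1 : ℂ) * Complex.exp ((p.2 : ℂ) * Complex.I)) ''
        (Set.Ioi r ×ˢ Set.Ioo 0 Real.pi) := by
    ext w
    constructor
    · rintro ⟨him, habs⟩
      refine ⟨⟨‖w‖, Complex.arg w⟩, ⟨habs, ?_, ?_⟩, ?_⟩
      · rcases lt_or_eq_of_le (Complex.arg_nonneg_iff.mpr him.le) with h | h
        · exact h
        · exfalso
          have := Complex.arg_eq_zero_iff.mp h.symm
          exact lt_irrefl _ (this.2 ▸ him)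
      · exact Complex.arg_lt_pi_iff.mpr (Or.inr (ne_of_gt him))
      · exact Complex.norm_mul_exp_arg_mul_I w
    · rintro ⟨⟨ρ, θ⟩, ⟨hρ, hθ⟩, rfl⟩
      simp only [Set.mem_Ioi] at hρ
      simp only [Set.mem_Ioo] at hθ
      have hρ0 : 0 < ρ := lt_of_le_of_lt hr hρ
      have him : ((ρ : ℂ) * Complex.exp ((θ : ℂ) * Complex.I)).im = ρ * Real.sin θ := by
        simp [Complex.exp_mul_I, Complex.mul_im, Complex.add_im, Complex.mul_re,
          Complex.sin_ofReal_re, Complex.sin_ofReal_im, Complex.cos_ofReal_re,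
          Complex.cos_ofReal_im, Complex.ofReal_re, Complex.ofReal_im, Complex.I_re,
          Complex.I_im]
      have habs : ‖(ρ : ℂ) * Complex.exp ((θ : ℂ) * Complex.I)‖ = ρ := by
        rw [norm_mul, Complex.norm_exp]
        simp [Complex.norm_real, abs_of_pos hρ0]
      constructor
      · show 0 < ((ρ : ℂ) * Complex.exp ((θ : ℂ) * Complex.I)).im
        rw [him]
        exact mul_pos hρ0 (Real.sin_pos_of_pos_of_lt_pi hθ.1 hθ.2)
      · show r < ‖(ρ : ℂ) * Complex.exp ((θ : ℂ) * Complex.I)‖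
        rw [habs]
        exact hρ
  rw [himg]
  apply IsPreconnected.image
  · exact ((convex_Ioi r).prod (convex_Ioo 0 Real.pi)).isPreconnected
  · apply Continuous.continuousOn
    exact (Complex.continuous_ofReal.comp continuous_fst).mul
      (Complex.continuous_exp.comp ((Complex.continuous_ofReal.comp continuous_snd).mul
        continuous_const))

/-- Key pointwise comparison: if `K ⊆ K'` with hydrodynamic maps `g, g'`, then
`Im g' ≤ Im g` on `ℍ \ K'`. -/
lemma im_le_im (K K' : Set ℂ) (hK'b : Bornology.IsBounded K') (hK'cl : K' = closure K' ∩ UHP)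
    (hKK' : K ⊆ K') (g g' : ℂ → ℂ)
    (hgd : DifferentiableOn ℂ g (UHP \ K)) (hgim : g '' (UHP \ K) = UHP)
    (hg'd : DifferentiableOn ℂ g' (UHP \ K')) (hg'inj : Set.InjOn g' (UHP \ K'))
    (hg'im : g' '' (UHP \ K') = UHP)
    (hg0 : Filter.Tendsto (fun z => g z - z) atInfUHP (nhds 0))
    (hg'0 : Filter.Tendsto (fun z => g' z - z) atInfUHP (nhds 0)) :
    ∀ z₀ ∈ UHP \ K', (g' z₀).im ≤ (g z₀).im := by
  classical
  set D : Set ℂ := UHP \ K' with hDdef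
  have hDsub : D ⊆ UHP \ K := fun z hz => ⟨hz.1, fun h => hz.2 (hKK' h)⟩
  have hDopen : IsOpen D := by
    have : D = UHP ∩ (closure K')ᶜ := by
      ext z
      constructor
      · rintro ⟨hzU, hzK⟩
        refine ⟨hzU, fun hc => hzK ?_⟩
        rw [hK'cl]; exact ⟨hc, hzU⟩
      · rintro ⟨hzU, hc⟩
        exact ⟨hzU, fun hz => hc (subset_closure hz)⟩
    rw [this]
    exact isOpen_UHP.inter isClosed_closure.isOpen_compl
  -- bound for K'
  obtain ⟨b₀, hb₀⟩ := hK'b.subset_closedBall 0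
  set b : ℝ := max b₀ 0 with hbdef
  have hbK : K' ⊆ Metric.closedBall 0 b :=
    hb₀.trans (Metric.closedBall_subset_closedBall (le_max_left _ _))
  have hb0 : 0 ≤ b := le_max_right _ _
  -- points high on the imaginary axis are in D
  have haxis : ∀ t : ℝ, b < t → ((t : ℂ) * Complex.I) ∈ D := by
    intro t ht
    have ht0 : 0 < t := lt_of_le_of_lt hb0 ht
    have habs : ‖(t : ℂ) * Complex.I‖ = t := by
      rw [norm_mul, Complex.norm_I, Complex.norm_real, mul_one, Real.norm_eq_abs, abs_of_pos ht0]
    constructor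
    · show 0 < ((t : ℂ) * Complex.I).im
      simp [Complex.mul_im, ht0]
    · intro hmem
      have := hbK hmem
      rw [Metric.mem_closedBall, dist_zero_right, habs] at this
      linarith
  intro z₀ hz₀
  apply le_of_forall_pos_le_add
  intro ε hε
  -- thresholds at infinity
  obtain ⟨M₁, hM₁⟩ := bound_of_tendsto_atInfUHP hg0 (half_pos hε)
  obtain ⟨M₂, hM₂⟩ := bound_of_tendsto_atInfUHP hg'0 (half_pos hε)
  obtain ⟨M₃, hM₃⟩ := bound_of_tendsto_atInfUHP hg'0 one_pos
  set m : ℝ := max (max M₁ M₂) (max M₃ (b + 1)) with hmdef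
  have hmM₁ : M₁ ≤ m := le_trans (le_max_left _ _) (le_max_left _ _)
  have hmM₂ : M₂ ≤ m := le_trans (le_max_right _ _) (le_max_left _ _)
  have hmM₃ : M₃ ≤ m := le_trans (le_max_left _ _) (le_max_right _ _)
  have hmb : b + 1 ≤ m := le_trans (le_max_right _ _) (le_max_right _ _)
  have hm0 : 0 ≤ m := le_trans (by linarith) hmb
  -- properness claim: |z| < m implies |g' z| ≤ m + 1
  have hP : ∀ z ∈ D, ‖z‖ < m → ‖g' z‖ ≤ m + 1 := by
    by_contra hcon
    push_neg at hcon
    obtain ⟨z₁, hz₁D, hz₁m, hz₁big⟩ := hcon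
    set T : Set ℂ := {w : ℂ | 0 < w.im ∧ m + 1 < ‖w‖} with hTdef
    set V : Set ℂ := g' '' (D ∩ Metric.ball 0 m) with hVdef
    set W : Set ℂ := g' '' (D \ Metric.closedBall 0 m) with hWdef
    have hVopen : IsOpen V :=
      isOpen_image_of_injOn hDopen hg'd hg'inj (hDopen.inter Metric.isOpen_ball)
        Set.inter_subset_left
    have hWopen : IsOpen W :=
      isOpen_image_of_injOn hDopen hg'd hg'inj (hDopen.sdiff Metric.isClosed_closedBall)
        Set.diff_subset
    -- g' of the sphere |z| = m is small
    have hsphere : ∀ z ∈ D, ‖z‖ = m → ‖g' z‖ ≤ m + 1 := by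
      intro z hzD hzm
      have h1 : ‖g' z - z‖ ≤ 1 := hM₃ z (hzm ▸ hmM₃) hzD.1
      have hle : ‖g' z‖ ≤ ‖z‖ + ‖g' z - z‖ := by
        simpa [add_sub_cancel] using norm_add_le z (g' z - z)
      rw [hzm] at hle
      linarith
    have hTsub : T ⊆ V ∪ W := by
      intro w hw
      have hwU : w ∈ UHP := hw.1
      rw [← hg'im] at hwU
      obtain ⟨z, hzD, rfl⟩ := hwU
      rcases lt_trichotomy (‖z‖) m with h | h | h
      · exact Or.inl ⟨z, ⟨hzD, by simpa [Metric.mem_ball, Complex.dist_eq] using h⟩, rfl⟩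
      · exact absurd (hsphere z hzD h) (not_le.mpr hw.2)
      · refine Or.inr ⟨z, ⟨hzD, ?_⟩, rfl⟩
        simp only [Metric.mem_closedBall, dist_zero_right, not_le]
        exact h
    have hTV : (T ∩ V).Nonempty := by
      refine ⟨g' z₁, ⟨?_, hz₁big⟩, ⟨z₁, ⟨hz₁D, ?_⟩, rfl⟩⟩
      · have : g' z₁ ∈ UHP := by
          rw [← hg'im]; exact ⟨z₁, hz₁D, rfl⟩
        exact this
      · simpa [Metric.mem_ball, Complex.dist_eq] using hz₁m
    have hTW : (T ∩ W).Nonempty := by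
      set z₂ : ℂ := ((m + 3 : ℝ) : ℂ) * Complex.I with hz₂def
      have hz₂abs : ‖z₂‖ = m + 3 := by
        rw [hz₂def, norm_mul, Complex.norm_I, Complex.norm_real, mul_one, Real.norm_eq_abs,
          abs_of_pos (by linarith)]
      have hz₂D : z₂ ∈ D := haxis _ (by linarith)
      have h1 : ‖g' z₂ - z₂‖ ≤ 1 := hM₃ z₂ (by rw [hz₂abs]; linarith) hz₂D.1
      have hz₂big : m + 1 < ‖g' z₂‖ := by
        have : ‖z₂‖ ≤ ‖g' z₂‖ + ‖g' z₂ - z₂‖ := by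
          simpa [sub_sub_cancel] using norm_sub_le (g' z₂) (g' z₂ - z₂)
        rw [hz₂abs] at this
        linarith
      refine ⟨g' z₂, ⟨?_, hz₂big⟩, ⟨z₂, ⟨hz₂D, ?_⟩, rfl⟩⟩
      · have : g' z₂ ∈ UHP := by rw [← hg'im]; exact ⟨z₂, hz₂D, rfl⟩
        exact this
      · simp only [Set.mem_diff, Metric.mem_closedBall, dist_zero_right, not_le]
        rw [hz₂abs]; linarith
    have hdisj : T ∩ (V ∩ W) = ∅ := by
      rw [Set.eq_empty_iff_forall_notMem]
      rintro w ⟨_, ⟨za, hza, hwa⟩, ⟨zb, hzb, hwb⟩⟩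
      have : za = zb := hg'inj hza.1 hzb.1 (hwa.trans hwb.symm)
      rw [this] at hza
      exact hzb.2 (Metric.ball_subset_closedBall hza.2)
    have := (isPreconnected_exterior (m + 1) (by linarith)) V W hVopen hWopen hTsub hTV hTW
    rw [hdisj] at this
    exact Set.not_nonempty_empty this
  -- set up the domain for the maximum principle
  have hgz₀U : g' z₀ ∈ UHP := by rw [← hg'im]; exact ⟨z₀, hz₀, rfl⟩
  set d₀ : ℝ := (g' z₀).im with hd₀def
  have hd₀ : 0 < d₀ := hgz₀U
  set δ : ℝ := min (ε / 2) (d₀ / 2) with hδdef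
  have hδ0 : 0 < δ := lt_min (half_pos hε) (half_pos hd₀)
  have hδd₀ : δ < d₀ := lt_of_le_of_lt (min_le_right _ _) (by linarith)
  have hδε : δ ≤ ε := le_trans (min_le_left _ _) (by linarith)
  set R : ℝ := max (m + 2) (‖g' z₀‖ + 1) with hRdef
  have hRm : m + 2 ≤ R := le_max_left _ _
  have hRz₀ : ‖g' z₀‖ < R := lt_of_lt_of_le (by linarith) (le_max_right _ _)
  set P : Set ℂ := {w : ℂ | δ < w.im ∧ ‖w‖ < R} with hPdef
  have hPopen : IsOpen P :=
    (isOpen_lt continuous_const Complex.continuous_im).inter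
      (isOpen_lt continuous_norm continuous_const)
  set Ω : Set ℂ := D ∩ g' ⁻¹' P with hΩdef
  have hΩopen : IsOpen Ω := hg'd.continuousOn.isOpen_inter_preimage hDopen hPopen
  have hz₀Ω : z₀ ∈ Ω := ⟨hz₀, hδd₀, hRz₀⟩
  have hΩbd : Bornology.IsBounded Ω := by
    apply Bornology.IsBounded.subset (Metric.isBounded_closedBall (x := (0:ℂ))
      (r := max m (R + 1)))
    intro z hz
    rw [Metric.mem_closedBall, dist_zero_right]
    rcases le_or_gt (‖z‖) m with h | h
    · exact le_trans h (le_max_left _ _)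
    · have h1 : ‖g' z - z‖ ≤ 1 := hM₃ z (le_trans hmM₃ h.le) hz.1.1
      have h2 : ‖g' z‖ < R := hz.2.2
      have : ‖z‖ ≤ ‖g' z‖ + ‖g' z - z‖ := by
        simpa [sub_sub_cancel] using norm_sub_le (g' z) (g' z - z)
      exact le_trans (by linarith) (le_max_right _ _)
  -- the closure of Ω stays inside D
  set Q : Set ℂ := {w : ℂ | δ ≤ w.im ∧ ‖w‖ ≤ R} with hQdef
  have hQcompact : IsCompact Q := by
    apply (isCompact_closedBall (0:ℂ) R).of_isClosed_subset
    · exact (isClosed_le continuous_const Complex.continuous_im).inter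
        (isClosed_le continuous_norm continuous_const)
    · intro w hw
      rw [Metric.mem_closedBall, dist_zero_right]
      exact hw.2
  have hclosure : ∀ ζ ∈ closure Ω, ζ ∈ D ∧ δ ≤ (g' ζ).im ∧ ‖g' ζ‖ ≤ R := by
    intro ζ hζ
    obtain ⟨x, hxΩ, hxlim⟩ := mem_closure_iff_seq_limit.mp hζ
    have hwQ : ∀ n, g' (x n) ∈ Q := fun n => ⟨(hxΩ n).2.1.le, (hxΩ n).2.2.le⟩
    obtain ⟨wstar, hwQ', φ, hφ, hwconv⟩ := hQcompact.tendsto_subseq hwQ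
    have hwU : wstar ∈ UHP := lt_of_lt_of_le hδ0 hwQ'.1
    rw [← hg'im] at hwU
    obtain ⟨zstar, hzD, hzeq⟩ := hwU
    have hxφ : Filter.Tendsto (x ∘ φ) Filter.atTop (nhds ζ) :=
      hxlim.comp hφ.tendsto_atTop
    have hxz : Filter.Tendsto (x ∘ φ) Filter.atTop (nhds zstar) := by
      rw [tendsto_nhds]
      intro N hNopen hNz
      have hON : IsOpen (g' '' (N ∩ D)) :=
        isOpen_image_of_injOn hDopen hg'd hg'inj (hNopen.inter hDopen) Set.inter_subset_right
      have hwmem : wstar ∈ g' '' (N ∩ D) := ⟨zstar, ⟨hNz, hzD⟩, hzeq⟩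
      have := hwconv.eventually (hON.mem_nhds hwmem)
      filter_upwards [this] with n hn
      obtain ⟨z', hz', hz'eq⟩ := hn
      have heq : z' = x (φ n) := hg'inj hz'.2 (hxΩ (φ n)).1 hz'eq
      show x (φ n) ∈ N
      exact Set.mem_of_eq_of_mem heq.symm hz'.1
    have hζz : ζ = zstar := tendsto_nhds_unique hxφ hxz
    subst hζz
    rw [hzeq]
    exact ⟨hzD, hwQ'.1, hwQ'.2⟩
  -- the test function and the maximum principle
  set F : ℂ → ℂ := fun z => Complex.exp (Complex.I * (g z - g' z)) with hFdef
  have hFnorm : ∀ z, ‖F z‖ = Real.exp ((g' z).im - (g z).im) := by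
    intro z
    rw [hFdef]
    simp only [Complex.norm_exp]
    congr 1
    simp [Complex.mul_re, Complex.sub_im, Complex.sub_re]
  have hFdiff : DifferentiableOn ℂ F D := by
    apply DifferentiableOn.cexp
    exact (differentiableOn_const _).mul ((hgd.mono hDsub).sub hg'd)
  have hFdc : DiffContOnCl ℂ F Ω := by
    constructor
    · exact hFdiff.mono Set.inter_subset_left
    · exact hFdiff.continuousOn.mono (fun ζ hζ => (hclosure ζ hζ).1)
  have hfront : ∀ ζ ∈ frontier Ω, ‖F ζ‖ ≤ Real.exp ε := by
    intro ζ hζf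
    have hζcl : ζ ∈ closure Ω := frontier_subset_closure hζf
    obtain ⟨hζD, hζδ, hζR⟩ := hclosure ζ hζcl
    have hζnΩ : ζ ∉ Ω := by
      rw [hΩopen.frontier_eq] at hζf
      exact hζf.2
    have hcase : (g' ζ).im = δ ∨ ‖g' ζ‖ = R := by
      by_contra hcc
      push_neg at hcc
      exact hζnΩ ⟨hζD, lt_of_le_of_ne hζδ (Ne.symm hcc.1), lt_of_le_of_ne hζR hcc.2⟩
    rw [hFnorm, Real.exp_le_exp]
    have hgζU : g ζ ∈ UHP := by rw [← hgim]; exact ⟨ζ, hDsub hζD, rfl⟩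
    have hgζim : 0 < (g ζ).im := hgζU
    rcases hcase with h | h
    · rw [h]; linarith
    · have hζm : m ≤ ‖ζ‖ := by
        by_contra hlt
        push_neg at hlt
        have := hP ζ hζD hlt
        rw [h] at this
        linarith
      have h1 : ‖g ζ - ζ‖ ≤ ε / 2 := hM₁ ζ (le_trans hmM₁ hζm) hζD.1
      have h2 : ‖g' ζ - ζ‖ ≤ ε / 2 := hM₂ ζ (le_trans hmM₂ hζm) hζD.1
      have him1 : |(g ζ - ζ).im| ≤ ε / 2 := le_trans (Complex.abs_im_le_norm _) h1
      have him2 : |(g' ζ - ζ).im| ≤ ε / 2 := le_trans (Complex.abs_im_le_norm _) h2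
      rw [Complex.sub_im] at him1 him2
      have := abs_le.mp him1
      have := abs_le.mp him2
      cases abs_le.mp him1 with
      | intro ha hb =>
        cases abs_le.mp him2 with
        | intro hc hd => linarith
  have hmax : ‖F z₀‖ ≤ Real.exp ε :=
    Complex.norm_le_of_forall_mem_frontier_norm_le hΩbd hFdc hfront (subset_closure hz₀Ω)
  rw [hFnorm, Real.exp_le_exp] at hmax
  linarith

/-- Monotonicity of the half-plane capacity: if `K ⊆ K'` are compact `ℍ`-hulls then
`hcap(K) ≤ hcap(K')`. -/
theorem hcap_mono (K K' : Set ℂ) (hK : IsCompactHHull K) (hK' : IsCompactHHull K')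
    (hKK' : K ⊆ K') (g g' : ℂ → ℂ) (a c : ℝ) (hg : HasHcap K g a)
    (hg' : HasHcap K' g' c) : a ≤ c := by
  obtain ⟨⟨hgd, hginj, hgim, hg0⟩, hglim⟩ := hg
  obtain ⟨⟨hg'd, hg'inj, hg'im, hg'0⟩, hg'lim⟩ := hg'
  obtain ⟨hK'b, hK'U, hK'cl, _⟩ := hK'
  have hpt := im_le_im K K' hK'b hK'cl hKK' g g' hgd hgim hg'd hg'inj hg'im hg0 hg'0
  -- bound for K'
  obtain ⟨b₀, hb₀⟩ := hK'b.subset_closedBall 0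
  set b : ℝ := max b₀ 0 with hbdef
  have hbK : K' ⊆ Metric.closedBall 0 b :=
    hb₀.trans (Metric.closedBall_subset_closedBall (le_max_left _ _))
  have hb0 : 0 ≤ b := le_max_right _ _
  -- the vertical ray tends to atInfUHP
  have hray : Filter.Tendsto (fun t : ℝ => (t : ℂ) * Complex.I) Filter.atTop atInfUHP := by
    rw [atInfUHP, Filter.tendsto_inf]
    constructor
    · rw [Filter.tendsto_comap_iff]
      have heq : ((fun z : ℂ => ‖z‖) ∘ fun t : ℝ => (t : ℂ) * Complex.I) = fun t : ℝ => |t| := by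
        funext t
        simp [Function.comp, norm_mul, Complex.norm_real]
      rw [heq]
      exact tendsto_abs_atTop_atTop
    · rw [Filter.tendsto_principal]
      filter_upwards [Filter.eventually_gt_atTop (0 : ℝ)] with t ht
      show 0 < ((t : ℂ) * Complex.I).im
      simp [Complex.mul_im, ht]
  have hsub : Filter.Tendsto (fun z => z * (g' z - z) - z * (g z - z)) atInfUHP
      (nhds ((c : ℂ) - (a : ℂ))) := hg'lim.sub hglim
  have hcomp : Filter.Tendsto
      (fun t : ℝ => ((t : ℂ) * Complex.I) * (g' ((t : ℂ) * Complex.I) - (t : ℂ) * Complex.I) -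
        ((t : ℂ) * Complex.I) * (g ((t : ℂ) * Complex.I) - (t : ℂ) * Complex.I))
      Filter.atTop (nhds ((c : ℂ) - (a : ℂ))) := hsub.comp hray
  have hre : Filter.Tendsto
      (fun t : ℝ => (((t : ℂ) * Complex.I) * (g' ((t : ℂ) * Complex.I) - (t : ℂ) * Complex.I) -
        ((t : ℂ) * Complex.I) * (g ((t : ℂ) * Complex.I) - (t : ℂ) * Complex.I)).re)
      Filter.atTop (nhds (((c : ℂ) - (a : ℂ)).re)) :=
    (Complex.continuous_re.tendsto _).comp hcomp
  have hreval : ((c : ℂ) - (a : ℂ)).re = c - a := by simp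
  rw [hreval] at hre
  have hev : ∀ᶠ t : ℝ in Filter.atTop, 0 ≤
      (((t : ℂ) * Complex.I) * (g' ((t : ℂ) * Complex.I) - (t : ℂ) * Complex.I) -
        ((t : ℂ) * Complex.I) * (g ((t : ℂ) * Complex.I) - (t : ℂ) * Complex.I)).re := by
    filter_upwards [Filter.eventually_gt_atTop b] with t ht
    have ht0 : 0 < t := lt_of_le_of_lt hb0 ht
    set z : ℂ := (t : ℂ) * Complex.I with hzdef
    have hzU : z ∈ UHP := by
      show 0 < z.im
      simp [hzdef, Complex.mul_im, ht0]
    have hzD : z ∈ UHP \ K' := by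
      refine ⟨hzU, fun hmem => ?_⟩
      have := hbK hmem
      rw [Metric.mem_closedBall, dist_zero_right] at this
      have habs : ‖z‖ = t := by
        rw [hzdef, norm_mul, Complex.norm_I, Complex.norm_real, mul_one, Real.norm_eq_abs, abs_of_pos ht0]
      rw [habs] at this
      linarith
    have him : (g' z).im ≤ (g z).im := hpt z hzD
    have heq : z * (g' z - z) - z * (g z - z) = z * (g' z - g z) := by ring
    rw [heq]
    have hzre : z.re = 0 := by simp [hzdef]
    have hzim : z.im = t := by simp [hzdef]
    rw [Complex.mul_re, hzre, hzim]
    have : (g' z - g z).im ≤ 0 := by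
      rw [Complex.sub_im]; linarith
    nlinarith
  have := ge_of_tendsto hre hev
  linarith
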